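/- Let n ≥ 1, q > −1 with p := 2q+3 > 1, β ≤ 0 and R₀ ≥ 0. Let (u,v) be a classical radial solution of −Δu = |u|^{2q+2}u + β|v|^{q+2}|u|^q u, −Δv = |v|^{2q+2}v + β|u|^{q+2}|v|^q v in ℝⁿ such that u(r) > v(r) > 0 for all r > R₀ (as functions of r = |x|). Then w := u − v satisfies the differential inequality −Δw ≥ w^p pointwise on {x ∈ ℝⁿ : |x| > R₀}. -/

import Mathlib

open Set

noncomputable section

/-- The Laplacian of `u : ℝⁿ → ℝ`, as the sum of the pure second derivatives. -/
def laplacian {n : ℕ} (u : EuclideanSpace ℝ (Fin n) → ℝ) (x : EuclideanSpace ℝ (Fin n)) : ℝ :=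
  ∑ i : Fin n, iteratedFDeriv ℝ 2 u x ![EuclideanSpace.single i (1 : ℝ), EuclideanSpace.single i (1 : ℝ)]

/-- The nonlinearity `|a|^{2q+2} a + β |b|^{q+2} |a|^q a`. -/
def Fnl (q β a b : ℝ) : ℝ := |a| ^ (2 * q + 2) * a + β * |b| ^ (q + 2) * |a| ^ q * a

/-! The difference `w = u - v` of the two equations has right-hand side
`(u^p - v^p) + β (uv)^{q+1} (v - u)` wherever `u > v > 0`. Superadditivity of `t ↦ t^p` for
`p ≥ 1` bounds the first summand below by `(u - v)^p`, and the coupling term is nonnegative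
because `β ≤ 0`. Since the Laplacian is linear on `C²` functions, this is `-Δw ≥ w^p`. -/

lemma laplacian_sub {n : ℕ} {u v : EuclideanSpace ℝ (Fin n) → ℝ}
    {x : EuclideanSpace ℝ (Fin n)} (hu : ContDiffAt ℝ 2 u x) (hv : ContDiffAt ℝ 2 v x) :
    laplacian (fun y => u y - v y) x = laplacian u x - laplacian v x := by
  change laplacian (u - v) x = _
  simp only [laplacian, iteratedFDeriv_sub_apply hu hv, ← Finset.sum_sub_distrib, sub_apply]

lemma Real.rpow_sub_le_rpow_sub_rpow {p a b : ℝ} (hb : 0 ≤ b) (hba : b ≤ a) (hp : 1 ≤ p) :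
    (a - b) ^ p ≤ a ^ p - b ^ p := by
  have h := Real.add_rpow_le_rpow_add (sub_nonneg.2 hba) hb hp
  rw [sub_add_cancel] at h
  linarith

lemma Fnl_of_pos (q β : ℝ) {a b : ℝ} (ha : 0 < a) (hb : 0 < b) :
    Fnl q β a b = a ^ (2 * q + 3) + β * (a * b) ^ (q + 1) * b := by
  rw [Fnl, abs_of_pos ha, abs_of_pos hb, ← Real.rpow_add_one ha.ne', mul_assoc _ (a ^ q),
    ← Real.rpow_add_one ha.ne', show q + 2 = (q + 1) + 1 by ring, Real.rpow_add_one hb.ne',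
    Real.mul_rpow ha.le hb.le]
  ring_nf

lemma Fnl_sub_Fnl_of_pos (q β : ℝ) {a b : ℝ} (ha : 0 < a) (hb : 0 < b) :
    Fnl q β a b - Fnl q β b a
      = (a ^ (2 * q + 3) - b ^ (2 * q + 3)) + β * (a * b) ^ (q + 1) * (b - a) := by
  rw [Fnl_of_pos q β ha hb, Fnl_of_pos q β hb ha, mul_comm b a]
  ring

lemma rpow_sub_le_Fnl_sub_Fnl {q β : ℝ} (hq : 1 ≤ 2 * q + 3) (hβ : β ≤ 0) {a b : ℝ}
    (hb : 0 < b) (hba : b < a) :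
    (a - b) ^ (2 * q + 3) ≤ Fnl q β a b - Fnl q β b a := by
  have ha : 0 < a := hb.trans hba
  have hcoupling : 0 ≤ β * (a * b) ^ (q + 1) * (b - a) :=
    mul_nonneg_of_nonpos_of_nonpos
      (mul_nonpos_of_nonpos_of_nonneg hβ (by positivity)) (by linarith)
  rw [Fnl_sub_Fnl_of_pos q β ha hb]
  linarith [Real.rpow_sub_le_rpow_sub_rpow hb.le hba.le hq]

theorem stmt18_general (n : ℕ) (q β p R₀ : ℝ) (hpdef : p = 2 * q + 3)
    (hp : 1 < p) (hβ : β ≤ 0)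
    (u v : EuclideanSpace ℝ (Fin n) → ℝ) (u₀ v₀ : ℝ → ℝ)
    (hurad : ∀ x, u x = u₀ ‖x‖) (hvrad : ∀ x, v x = v₀ ‖x‖)
    (hu2 : ContDiff ℝ 2 u) (hv2 : ContDiff ℝ 2 v)
    (hequ : ∀ x, -laplacian u x = Fnl q β (u x) (v x))
    (heqv : ∀ x, -laplacian v x = Fnl q β (v x) (u x))
    (hord : ∀ r : ℝ, R₀ < r → v₀ r < u₀ r ∧ 0 < v₀ r) :
    ∀ x : EuclideanSpace ℝ (Fin n), R₀ < ‖x‖ →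
      (u x - v x) ^ p ≤ -laplacian (fun y => u y - v y) x := by
  intro x hx
  obtain ⟨hvu, hv⟩ := hord ‖x‖ hx
  rw [← hurad, ← hvrad] at hvu
  rw [← hvrad] at hv
  have hw : -laplacian (fun y => u y - v y) x = Fnl q β (u x) (v x) - Fnl q β (v x) (u x) := by
    rw [laplacian_sub hu2.contDiffAt hv2.contDiffAt, ← hequ, ← heqv]
    ring
  rw [hw, hpdef]
  exact rpow_sub_le_Fnl_sub_Fnl (hpdef ▸ hp.le) hβ hv hvu

/-- If `β ≤ 0` and `(u,v)` is a classical radial solution of the system in `ℝⁿ` with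
`u(r) > v(r) > 0` for `r > R₀`, then `w := u - v` satisfies `-Δw ≥ w^p` on `{|x| > R₀}`,
where `p = 2q+3 > 1`. -/
theorem stmt18 (n : ℕ) (hn1 : 1 ≤ n) (q β p R₀ : ℝ) (hq : -1 < q) (hpdef : p = 2 * q + 3)
    (hp : 1 < p) (hβ : β ≤ 0) (hR₀ : 0 ≤ R₀)
    (u v : EuclideanSpace ℝ (Fin n) → ℝ) (u₀ v₀ : ℝ → ℝ)
    (hurad : ∀ x, u x = u₀ ‖x‖) (hvrad : ∀ x, v x = v₀ ‖x‖)
    (hu2 : ContDiff ℝ 2 u) (hv2 : ContDiff ℝ 2 v)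
    (hequ : ∀ x, -laplacian u x = Fnl q β (u x) (v x))
    (heqv : ∀ x, -laplacian v x = Fnl q β (v x) (u x))
    (hord : ∀ r : ℝ, R₀ < r → v₀ r < u₀ r ∧ 0 < v₀ r) :
    ∀ x : EuclideanSpace ℝ (Fin n), R₀ < ‖x‖ →
      (u x - v x) ^ p ≤ -laplacian (fun y => u y - v y) x :=
  stmt18_general n q β p R₀ hpdef hp hβ u v u₀ v₀ hurad hvrad hu2 hv2 hequ heqv hord
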